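/- arXiv:2104.13801 — 2 statements merged into one kernel-verified Lean document; each statement's English description precedes it below -/
import Mathlib

section
/- Let l0,l1 ∈ ℝ, s0,s1 > 0, θ ∈ (0,1), m_θ(x) = (1−θ)·p_{l0,s0}(x) + θ·p_{l1,s1}(x), Δ = (l1−l0)², and S = s0·s1·((s1−s0)² + Δ)·θ·(1−θ) + s0²·s1². Then the differential entropy of the mixture admits the closed form: −∫_ℝ m_θ(x)·log m_θ(x) dx = θ·log( ((s1+s0)² + Δ) / ( 2·√S + (s1² + s0² + Δ)·θ + 2·s0·s1·(1−θ) ) ) + (1−θ)·log( ((s1+s0)² + Δ) / ( 2·√S + 2·s0·s1·θ + (s1² + s0² + Δ)·(1−θ) ) ) + θ·log(s1/s0) + log(4·π·s0). -/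
/-!
The mixture density is a rational function of `x`: with `w = (1-θ)s0 + θs1`,
`αw = (1-θ)s0 l1 + θs1 l0` and `(βw)² = S`,
`m_θ(x) = (w/π)((x-α)² + β²) / (((x-l0)² + s0²)((x-l1)² + s1²))`.
So `log m_θ` is a combination of functions `log ((x-a)² + b²)`, and the entropy reduces to the
log-moments `∫ p_{l,s}(x) log ((x-a)² + b²) dx = log ((l-a)² + (s+b)²)`. Both sides of this
identity have derivative `2π p_{l,s+b}(a)` in `b`, the left one because
`∫ p_{l,s} p_{a,b} = p_{l,s+b}(a)` (Cauchy laws are stable under convolution), and both are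
`log b² + o(1)` as `b → ∞`.
-/

open MeasureTheory Real

/-- The Cauchy density with location `l` and scale `s`. -/
noncomputable def cauchyPdf (l s x : ℝ) : ℝ := s / (π * (s ^ 2 + (x - l) ^ 2))

open Filter Topology

lemma cauchyPdf_eq_cauchyPDFReal {s : ℝ} (hs : 0 ≤ s) (l : ℝ) :
    cauchyPdf l s = ProbabilityTheory.cauchyPDFReal l s.toNNReal := by
  ext x
  rw [ProbabilityTheory.cauchyPDFReal_def, Real.coe_toNNReal s hs, cauchyPdf]
  field_simp
  ring

lemma cauchyPdf_pos {s : ℝ} (hs : 0 < s) (l x : ℝ) : 0 < cauchyPdf l s x := by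
  unfold cauchyPdf
  positivity

@[fun_prop]
lemma measurable_cauchyPdf (l s : ℝ) : Measurable (cauchyPdf l s) := by
  unfold cauchyPdf
  fun_prop

lemma continuous_cauchyPdf {s : ℝ} (hs : 0 < s) (l : ℝ) : Continuous (cauchyPdf l s) := by
  unfold cauchyPdf
  exact continuous_const.div (by fun_prop) fun x => by positivity

lemma integrable_cauchyPdf {s : ℝ} (hs : 0 ≤ s) (l : ℝ) : Integrable (cauchyPdf l s) := by
  rw [cauchyPdf_eq_cauchyPDFReal hs]
  exact ProbabilityTheory.integrable_cauchyPDFReal l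

lemma integral_cauchyPdf {s : ℝ} (hs : 0 < s) (l : ℝ) : ∫ x, cauchyPdf l s x = 1 := by
  rw [cauchyPdf_eq_cauchyPDFReal hs.le]
  exact ProbabilityTheory.integral_cauchyPDFReal_eq_one l (by simpa using hs)

lemma cauchyPdf_le_inv {s : ℝ} (hs : 0 < s) (l x : ℝ) : cauchyPdf l s x ≤ (π * s)⁻¹ := by
  rw [cauchyPdf, ← one_div, div_le_div_iff₀ (by positivity) (by positivity)]
  nlinarith [mul_nonneg (mul_nonneg pi_pos.le hs.le) (sq_nonneg (x - l))]

lemma cauchyPdf_le_mul_inv_one_add_sq {s : ℝ} (hs : 0 < s) (l x : ℝ) :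
    cauchyPdf l s x ≤ (1 + 2 * l ^ 2 + 2 * s ^ 2) / (π * s) * (1 + x ^ 2)⁻¹ := by
  have key : s ^ 2 * (1 + x ^ 2) ≤ (1 + 2 * l ^ 2 + 2 * s ^ 2) * (s ^ 2 + (x - l) ^ 2) := by
    nlinarith [sq_nonneg (x - 2 * l), sq_nonneg (s * (x - 2 * l)), sq_nonneg (s * l),
      sq_nonneg (l * (x - l)), sq_nonneg (s * s)]
  rw [cauchyPdf, div_mul_eq_mul_div, ← div_eq_mul_inv, div_div,
    div_le_div_iff₀ (by positivity) (by positivity)]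
  nlinarith [mul_le_mul_of_nonneg_left key (mul_pos pi_pos hs).le]

lemma integrable_cauchyPdf_mul_cauchyPdf {s b : ℝ} (hs : 0 < s) (hb : 0 < b) (l a : ℝ) :
    Integrable fun x => cauchyPdf l s x * cauchyPdf a b x :=
  (integrable_cauchyPdf hs.le l).mul_bdd (continuous_cauchyPdf hb a).aestronglyMeasurable
    (ae_of_all _ fun x => by
      rw [norm_of_nonneg (cauchyPdf_pos hb a x).le]; exact cauchyPdf_le_inv hb a x)

lemma integrable_cauchyPdf_mul_of_abs_le {s : ℝ} (hs : 0 < s) (l : ℝ) {g : ℝ → ℝ}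
    (hg : AEStronglyMeasurable g) {C : ℝ}
    (hgC : ∀ x, |g x| ≤ C * (1 + x ^ 2) ^ (1 / 4 : ℝ)) :
    Integrable fun x => cauchyPdf l s x * g x := by
  set K := (1 + 2 * l ^ 2 + 2 * s ^ 2) / (π * s)
  have hdecay : Integrable fun x : ℝ => (1 + ‖x‖ ^ 2) ^ (-(3 / 2 : ℝ) / 2) :=
    integrable_rpow_neg_one_add_norm_sq (by norm_num)
  refine (hdecay.const_mul (K * C)).mono'
    ((continuous_cauchyPdf hs l).aestronglyMeasurable.mul hg) (ae_of_all _ fun x => ?_)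
  have hsplit :
      (1 + x ^ 2)⁻¹ * (1 + x ^ 2) ^ (1 / 4 : ℝ) = (1 + x ^ 2) ^ (-(3 / 2 : ℝ) / 2) := by
    rw [← rpow_neg_one, ← rpow_add (by positivity)]; norm_num
  rw [norm_mul, norm_of_nonneg (cauchyPdf_pos hs l x).le, Real.norm_eq_abs, Real.norm_eq_abs,
    sq_abs, ← hsplit]
  calc cauchyPdf l s x * |g x| ≤ K * (1 + x ^ 2)⁻¹ * (C * (1 + x ^ 2) ^ (1 / 4 : ℝ)) :=
        mul_le_mul (cauchyPdf_le_mul_inv_one_add_sq hs l x) (hgC x) (abs_nonneg _)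
          (by positivity)
    _ = _ := by ring

lemma exists_abs_log_sq_add_sq_le (a : ℝ) {b : ℝ} (hb : 0 < b) :
    ∃ C, ∀ x : ℝ, |log ((x - a) ^ 2 + b ^ 2)| ≤ C * (1 + x ^ 2) ^ (1 / 4 : ℝ) := by
  set c := 2 + 2 * a ^ 2 + b ^ 2
  refine ⟨2 * |log b| + 4 * c ^ (1 / 4 : ℝ), fun x => ?_⟩
  have hone : 1 ≤ (1 + x ^ 2) ^ (1 / 4 : ℝ) := one_le_rpow (by nlinarith) (by norm_num)
  have hlower : 2 * log b ≤ log ((x - a) ^ 2 + b ^ 2) := by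
    calc 2 * log b = log (b ^ 2) := by rw [log_pow]; norm_num
      _ ≤ _ := log_le_log (by positivity) (by nlinarith)
  have hupper :
      log ((x - a) ^ 2 + b ^ 2) ≤ 4 * (c ^ (1 / 4 : ℝ) * (1 + x ^ 2) ^ (1 / 4 : ℝ)) := by
    rw [← mul_rpow (by positivity) (by positivity)]
    calc log ((x - a) ^ 2 + b ^ 2) ≤ ((x - a) ^ 2 + b ^ 2) ^ (1 / 4 : ℝ) / (1 / 4) :=
          log_le_rpow_div (by positivity) (by norm_num)
      _ ≤ (c * (1 + x ^ 2)) ^ (1 / 4 : ℝ) / (1 / 4) := by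
          gcongr
          nlinarith [sq_nonneg (x + a), sq_nonneg (x * a), sq_nonneg (x * b)]
      _ = _ := by ring
  have hc : 0 ≤ c ^ (1 / 4 : ℝ) := by positivity
  rw [abs_le]
  constructor <;> nlinarith [neg_abs_le (log b), abs_nonneg (log b)]

lemma integrable_cauchyPdf_mul_log {s : ℝ} (hs : 0 < s) (l a : ℝ) {b : ℝ} (hb : 0 < b) :
    Integrable fun x => cauchyPdf l s x * log ((x - a) ^ 2 + b ^ 2) := by
  obtain ⟨C, hC⟩ := exists_abs_log_sq_add_sq_le a hb
  exact integrable_cauchyPdf_mul_of_abs_le hs l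
    (Measurable.aestronglyMeasurable (by fun_prop)) hC

lemma tendsto_arctan_sub_div_atTop (l : ℝ) {s : ℝ} (hs : 0 < s) :
    Tendsto (fun x => arctan ((x - l) / s)) atTop (𝓝 (π / 2)) :=
  tendsto_nhds_of_tendsto_nhdsWithin tendsto_arctan_atTop |>.comp <|
    (tendsto_atTop_add_const_right _ (-l) tendsto_id).atTop_div_const hs

lemma tendsto_arctan_sub_div_atBot (l : ℝ) {s : ℝ} (hs : 0 < s) :
    Tendsto (fun x => arctan ((x - l) / s)) atBot (𝓝 (-(π / 2))) :=
  tendsto_nhds_of_tendsto_nhdsWithin tendsto_arctan_atBot |>.comp <|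
    (tendsto_atBot_add_const_right _ (-l) tendsto_id).atBot_div_const hs

lemma tendsto_log_sq_add_sq_sub_log_sq (a b : ℝ) :
    Tendsto (fun x => log ((x - a) ^ 2 + b ^ 2) - log (x ^ 2)) (Bornology.cobounded ℝ)
      (𝓝 0) := by
  have hinv := tendsto_inv₀_cobounded (α := ℝ)
  have hratio : Tendsto (fun x : ℝ => (1 - a * x⁻¹) ^ 2 + (b * x⁻¹) ^ 2)
      (Bornology.cobounded ℝ) (𝓝 1) := by
    simpa using (((tendsto_const_nhds (x := (1 : ℝ))).sub (hinv.const_mul a)).pow 2).add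
      ((hinv.const_mul b).pow 2)
  have hlog := (continuousAt_log one_ne_zero).tendsto.comp hratio
  rw [log_one] at hlog
  refine hlog.congr' ?_
  filter_upwards [Bornology.eventually_ne_cobounded 0, Bornology.eventually_ne_cobounded a]
    with x hx hxa
  have hpos : 0 < (x - a) ^ 2 + b ^ 2 := by
    have := sub_ne_zero.2 hxa
    positivity
  rw [Function.comp_apply, ← log_div hpos.ne' (by positivity)]
  congr 1
  field_simp

lemma tendsto_log_sq_add_sq_sub_log_sq_add_sq (l s a b : ℝ) :
    Tendsto (fun x => log ((x - l) ^ 2 + s ^ 2) - log ((x - a) ^ 2 + b ^ 2))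
      (Bornology.cobounded ℝ) (𝓝 0) := by
  simpa using (tendsto_log_sq_add_sq_sub_log_sq l s).sub (tendsto_log_sq_add_sq_sub_log_sq a b)

lemma hasDerivAt_arctan_sub_div (a : ℝ) {b : ℝ} (hb : b ≠ 0) (x : ℝ) :
    HasDerivAt (fun x => arctan ((x - a) / b)) (π * cauchyPdf a b x) x := by
  refine (((hasDerivAt_id' x).sub_const a).div_const b).arctan.congr_deriv ?_
  unfold cauchyPdf
  field_simp

lemma hasDerivAt_log_sq_add_sq (a : ℝ) {b : ℝ} (hb : b ≠ 0) (x : ℝ) :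
    HasDerivAt (fun x => log ((x - a) ^ 2 + b ^ 2)) (2 * (x - a) / ((x - a) ^ 2 + b ^ 2)) x := by
  have hpos : 0 < (x - a) ^ 2 + b ^ 2 := by positivity
  simpa using ((((hasDerivAt_id' x).sub_const a).pow 2).add_const (b ^ 2)).log hpos.ne'

/-- Partial fractions give an explicit antiderivative; they degenerate when `a = l` and `s = b`. -/
lemma integral_cauchyPdf_mul_cauchyPdf_of_ne {s b : ℝ} (hs : 0 < s) (hb : 0 < b) {l a : ℝ}
    (hla : a ≠ l) :
    ∫ x, cauchyPdf l s x * cauchyPdf a b x = cauchyPdf l (s + b) a := by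
  obtain ⟨d, rfl⟩ : ∃ d, a = l + d := ⟨a - l, by ring⟩
  have hd : d ≠ 0 := by simpa using hla
  set Q := ((s + b) ^ 2 + d ^ 2) * ((s - b) ^ 2 + d ^ 2) with hQ_def
  have hQ : 0 < Q := by positivity
  clear_value Q
  set u := (b ^ 2 + d ^ 2 - s ^ 2) / s
  set v := (s ^ 2 + d ^ 2 - b ^ 2) / b
  set G : ℝ → ℝ := fun x => s * b / (π ^ 2 * Q) * (d * (log ((x - l) ^ 2 + s ^ 2) -
    log ((x - (l + d)) ^ 2 + b ^ 2)) + u * arctan ((x - l) / s) +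
    v * arctan ((x - (l + d)) / b))
  have hG : ∀ x, HasDerivAt G (cauchyPdf l s x * cauchyPdf (l + d) b x) x := fun x => by
    refine (((((hasDerivAt_log_sq_add_sq l hs.ne' x).sub
      (hasDerivAt_log_sq_add_sq (l + d) hb.ne' x)).const_mul d).add
      ((hasDerivAt_arctan_sub_div l hs.ne' x).const_mul u)).add
      ((hasDerivAt_arctan_sub_div (l + d) hb.ne' x).const_mul v)).const_mul
        (s * b / (π ^ 2 * Q)) |>.congr_deriv ?_
    simp only [cauchyPdf, u, v]
    field_simp
    rw [hQ_def]
    ring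
  have hlog := tendsto_log_sq_add_sq_sub_log_sq_add_sq l s (l + d) b
  have hG_top := ((((hlog.mono_left IsOrderBornology.atTop_le_cobounded).const_mul d).add
    ((tendsto_arctan_sub_div_atTop l hs).const_mul u)).add
    ((tendsto_arctan_sub_div_atTop (l + d) hb).const_mul v)).const_mul (s * b / (π ^ 2 * Q))
  have hG_bot := ((((hlog.mono_left IsOrderBornology.atBot_le_cobounded).const_mul d).add
    ((tendsto_arctan_sub_div_atBot l hs).const_mul u)).add
    ((tendsto_arctan_sub_div_atBot (l + d) hb).const_mul v)).const_mul (s * b / (π ^ 2 * Q))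
  rw [integral_of_hasDerivAt_of_tendsto hG (integrable_cauchyPdf_mul_cauchyPdf hs hb _ _)
    hG_bot hG_top]
  simp only [cauchyPdf, u, v]
  field_simp
  rw [hQ_def]
  ring

lemma integral_cauchyPdf_mul_cauchyPdf {s b : ℝ} (hs : 0 < s) (hb : 0 < b) (l a : ℝ) :
    ∫ x, cauchyPdf l s x * cauchyPdf a b x = cauchyPdf l (s + b) a := by
  have hcont : Continuous fun a => ∫ x, cauchyPdf l s x * cauchyPdf a b x := by
    refine continuous_of_dominated (bound := fun x => cauchyPdf l s x * (π * b)⁻¹)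
      (fun a => (integrable_cauchyPdf_mul_cauchyPdf hs hb l a).aestronglyMeasurable)
      (fun a => ae_of_all _ fun x => ?_) ((integrable_cauchyPdf hs.le l).mul_const _)
      (ae_of_all _ fun x => ?_)
    · rw [norm_of_nonneg (mul_pos (cauchyPdf_pos hs l x) (cauchyPdf_pos hb a x)).le]
      exact mul_le_mul_of_nonneg_left (cauchyPdf_le_inv hb a x) (cauchyPdf_pos hs l x).le
    · unfold cauchyPdf
      exact continuous_const.mul (continuous_const.div (by fun_prop) fun a => by positivity)
  refine congrFun (Continuous.ext_on (dense_compl_singleton l) hcont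
    (continuous_cauchyPdf (by positivity) l) fun a ha => ?_) a
  exact integral_cauchyPdf_mul_cauchyPdf_of_ne hs hb ha

lemma eq_zero_of_hasDerivAt_zero_of_tendsto_atTop {f : ℝ → ℝ} {c : ℝ}
    (hf : ∀ t ∈ Set.Ioi c, HasDerivAt f 0 t) (hlim : Tendsto f atTop (𝓝 0)) {b : ℝ}
    (hb : c < b) : f b = 0 := by
  have hconst : ∀ t ∈ Set.Ioi c, f t = f b := fun t ht =>
    isOpen_Ioi.is_const_of_deriv_eq_zero isPreconnected_Ioi
      (fun t ht => (hf t ht).differentiableAt.differentiableWithinAt)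
      (fun t ht => (hf t ht).deriv) ht hb
  have hlim' : Tendsto (fun _ => f b) atTop (𝓝 0) :=
    hlim.congr' (eventually_gt_atTop c |>.mono hconst)
  exact tendsto_nhds_unique tendsto_const_nhds hlim'

lemma hasDerivAt_integral_cauchyPdf_mul_log {s : ℝ} (hs : 0 < s) (l a : ℝ) {t : ℝ}
    (ht : 0 < t) :
    HasDerivAt (fun t => ∫ x, cauchyPdf l s x * log ((x - a) ^ 2 + t ^ 2))
      (2 * π * cauchyPdf l (s + t) a) t := by
  have hball : ∀ t' ∈ Metric.ball t (t / 2), t / 2 < t' := fun t' ht' => by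
    rw [Metric.mem_ball, Real.dist_eq, abs_lt] at ht'; linarith
  have hderiv : ∀ x, ∀ t' ∈ Metric.ball t (t / 2), HasDerivAt
      (fun t => cauchyPdf l s x * log ((x - a) ^ 2 + t ^ 2))
      (cauchyPdf l s x * (2 * π * cauchyPdf a t' x)) t' := fun x t' ht' => by
    have ht'0 : 0 < t' := (half_pos ht).trans (hball t' ht')
    refine (((hasDerivAt_pow 2 t').const_add ((x - a) ^ 2)).log
      (by positivity)).const_mul (cauchyPdf l s x) |>.congr_deriv ?_
    unfold cauchyPdf
    field_simp
    ring
  have hbound : ∀ x, ∀ t' ∈ Metric.ball t (t / 2),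
      ‖cauchyPdf l s x * (2 * π * cauchyPdf a t' x)‖ ≤ cauchyPdf l s x * (4 / t) :=
    fun x t' ht' => by
      have ht'0 : 0 < t' := (half_pos ht).trans (hball t' ht')
      have := cauchyPdf_pos hs l x
      rw [norm_of_nonneg (by have := cauchyPdf_pos ht'0 a x; positivity)]
      gcongr
      calc 2 * π * cauchyPdf a t' x ≤ 2 * π * (π * t')⁻¹ := by
            gcongr; exact cauchyPdf_le_inv ht'0 a x
        _ = 2 / t' := by field_simp
        _ ≤ 4 / t := by rw [div_le_div_iff₀ ht'0 ht]; linarith [hball t' ht']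
  have h := hasDerivAt_integral_of_dominated_loc_of_deriv_le
    (Metric.ball_mem_nhds t (half_pos ht))
    (Eventually.of_forall fun t => Measurable.aestronglyMeasurable (by fun_prop))
    (integrable_cauchyPdf_mul_log hs l a ht)
    ((continuous_cauchyPdf hs l).mul
      (continuous_const.mul (continuous_cauchyPdf ht a))).aestronglyMeasurable
    (ae_of_all _ hbound) ((integrable_cauchyPdf hs.le l).mul_const _) (ae_of_all _ hderiv)
  have hint : ∫ x, cauchyPdf l s x * (2 * π * cauchyPdf a t x) =
      2 * π * cauchyPdf l (s + t) a := by
    simp_rw [mul_left_comm (cauchyPdf l s _)]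
    rw [integral_const_mul, integral_cauchyPdf_mul_cauchyPdf hs ht]
  exact hint ▸ h.2

lemma tendsto_integral_cauchyPdf_mul_log_sub_log {s : ℝ} (hs : 0 < s) (l a : ℝ) :
    Tendsto (fun t => (∫ x, cauchyPdf l s x * log ((x - a) ^ 2 + t ^ 2)) - log (t ^ 2))
      atTop (𝓝 0) := by
  have hdom : Tendsto (fun t => ∫ x, cauchyPdf l s x * (log ((x - a) ^ 2 + t ^ 2) - log (t ^ 2)))
      atTop (𝓝 0) := by
    refine tendsto_integral_filter_of_dominated_convergence (f := fun _ => 0)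
      (fun x => cauchyPdf l s x * log ((x - a) ^ 2 + 1 ^ 2))
      (Eventually.of_forall fun t => Measurable.aestronglyMeasurable (by fun_prop)) ?_
      (integrable_cauchyPdf_mul_log hs l a one_pos) (ae_of_all _ fun x => ?_)
      |>.trans_eq (by simp)
    · filter_upwards [eventually_ge_atTop 1] with t ht
      refine ae_of_all _ fun x => ?_
      have hratio : log ((x - a) ^ 2 + t ^ 2) - log (t ^ 2) = log ((x - a) ^ 2 / t ^ 2 + 1) := by
        rw [← log_div (by positivity) (by positivity)]
        congr 1
        field_simp
      have hle : (x - a) ^ 2 / t ^ 2 ≤ (x - a) ^ 2 := div_le_self (sq_nonneg _) (by nlinarith)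
      have hp := cauchyPdf_pos hs l x
      rw [hratio, norm_mul, norm_of_nonneg hp.le,
        norm_of_nonneg (log_nonneg (le_add_of_nonneg_left (by positivity))), one_pow]
      gcongr
    · simpa [add_comm] using ((tendsto_log_sq_add_sq_sub_log_sq 0 (x - a)).mono_left
        IsOrderBornology.atTop_le_cobounded).const_mul (cauchyPdf l s x)
  refine hdom.congr' ?_
  filter_upwards [eventually_gt_atTop 0] with t ht
  simp_rw [mul_sub]
  rw [integral_sub (integrable_cauchyPdf_mul_log hs l a ht)
    ((integrable_cauchyPdf hs.le l).mul_const _), integral_mul_const, integral_cauchyPdf hs l,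
    one_mul]

theorem integral_cauchyPdf_mul_log {s : ℝ} (hs : 0 < s) (l a : ℝ) {b : ℝ} (hb : 0 < b) :
    ∫ x, cauchyPdf l s x * log ((x - a) ^ 2 + b ^ 2) = log ((l - a) ^ 2 + (s + b) ^ 2) := by
  have hderiv : ∀ t ∈ Set.Ioi 0, HasDerivAt (fun t => log ((l - a) ^ 2 + (s + t) ^ 2))
      (2 * π * cauchyPdf l (s + t) a) t := fun t (ht : 0 < t) => by
    have hpos : 0 < (l - a) ^ 2 + (s + t) ^ 2 := by positivity
    refine ((((hasDerivAt_id' t).const_add s).fun_pow 2).const_add _).log hpos.ne'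
      |>.congr_deriv ?_
    unfold cauchyPdf
    field_simp
    ring
  have hcomparison :
      Tendsto (fun t => log ((l - a) ^ 2 + (s + t) ^ 2) - log (t ^ 2)) atTop (𝓝 0) :=
    ((tendsto_log_sq_add_sq_sub_log_sq (-s) (l - a)).mono_left
      IsOrderBornology.atTop_le_cobounded).congr fun t => by ring_nf
  have h := eq_zero_of_hasDerivAt_zero_of_tendsto_atTop
    (f := fun t => (∫ x, cauchyPdf l s x * log ((x - a) ^ 2 + t ^ 2)) -
      log ((l - a) ^ 2 + (s + t) ^ 2))
    (fun t ht => by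
      simpa using (hasDerivAt_integral_cauchyPdf_mul_log hs l a ht).fun_sub (hderiv t ht))
    (by simpa using (tendsto_integral_cauchyPdf_mul_log_sub_log hs l a).sub hcomparison) hb
  exact sub_eq_zero.1 h

lemma log_rational_eq {C β s0 s1 : ℝ} (hC : 0 < C) (hβ : 0 < β) (hs0 : 0 < s0) (hs1 : 0 < s1)
    (α l0 l1 x : ℝ) :
    log (C * ((x - α) ^ 2 + β ^ 2) / (((x - l0) ^ 2 + s0 ^ 2) * ((x - l1) ^ 2 + s1 ^ 2))) =
      log C + log ((x - α) ^ 2 + β ^ 2) - log ((x - l0) ^ 2 + s0 ^ 2) -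
        log ((x - l1) ^ 2 + s1 ^ 2) := by
  rw [log_div (by positivity) (by positivity), log_mul hC.ne' (by positivity),
    log_mul (by positivity) (by positivity)]
  ring

lemma integrable_cauchyPdf_mul_log_rational {C β s0 s1 s : ℝ} (hC : 0 < C) (hβ : 0 < β)
    (hs0 : 0 < s0) (hs1 : 0 < s1) (hs : 0 < s) (α l0 l1 l : ℝ) :
    Integrable fun x => cauchyPdf l s x *
      log (C * ((x - α) ^ 2 + β ^ 2) / (((x - l0) ^ 2 + s0 ^ 2) * ((x - l1) ^ 2 + s1 ^ 2))) := by
  simp_rw [log_rational_eq hC hβ hs0 hs1, mul_sub, mul_add]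
  exact ((((integrable_cauchyPdf hs.le l).mul_const _).add
    (integrable_cauchyPdf_mul_log hs l α hβ)).sub (integrable_cauchyPdf_mul_log hs l l0 hs0)).sub
    (integrable_cauchyPdf_mul_log hs l l1 hs1)

lemma integral_cauchyPdf_mul_log_rational {C β s0 s1 s : ℝ} (hC : 0 < C) (hβ : 0 < β)
    (hs0 : 0 < s0) (hs1 : 0 < s1) (hs : 0 < s) (α l0 l1 l : ℝ) :
    ∫ x, cauchyPdf l s x *
      log (C * ((x - α) ^ 2 + β ^ 2) / (((x - l0) ^ 2 + s0 ^ 2) * ((x - l1) ^ 2 + s1 ^ 2))) =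
    log (C * ((l - α) ^ 2 + (s + β) ^ 2) /
      (((l - l0) ^ 2 + (s + s0) ^ 2) * ((l - l1) ^ 2 + (s + s1) ^ 2))) := by
  have hint := integrable_cauchyPdf_mul_log hs l
  have hconst := (integrable_cauchyPdf hs.le l).mul_const (log C)
  rw [log_div (by positivity) (by positivity), log_mul hC.ne' (by positivity),
    log_mul (by positivity) (by positivity)]
  simp_rw [log_rational_eq hC hβ hs0 hs1, mul_sub, mul_add]
  rw [integral_sub ((hconst.fun_add (hint α hβ)).sub' (hint l0 hs0)) (hint l1 hs1),
    integral_sub (hconst.fun_add (hint α hβ)) (hint l0 hs0), integral_add hconst (hint α hβ),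
    integral_mul_const, integral_cauchyPdf hs, one_mul, integral_cauchyPdf_mul_log hs l α hβ,
    integral_cauchyPdf_mul_log hs l l0 hs0, integral_cauchyPdf_mul_log hs l l1 hs1]
  ring

lemma integral_cauchyPdf_mixture_mul_log {θ C β s0 s1 : ℝ} (hC : 0 < C) (hβ : 0 < β)
    (hs0 : 0 < s0) (hs1 : 0 < s1) (α l0 l1 : ℝ)
    (hmix : ∀ x, (1 - θ) * cauchyPdf l0 s0 x + θ * cauchyPdf l1 s1 x =
      C * ((x - α) ^ 2 + β ^ 2) / (((x - l0) ^ 2 + s0 ^ 2) * ((x - l1) ^ 2 + s1 ^ 2))) :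
    ∫ x, ((1 - θ) * cauchyPdf l0 s0 x + θ * cauchyPdf l1 s1 x) *
        log ((1 - θ) * cauchyPdf l0 s0 x + θ * cauchyPdf l1 s1 x) =
      (1 - θ) * log (C * ((l0 - α) ^ 2 + (s0 + β) ^ 2) /
        (((l0 - l0) ^ 2 + (s0 + s0) ^ 2) * ((l0 - l1) ^ 2 + (s0 + s1) ^ 2))) +
      θ * log (C * ((l1 - α) ^ 2 + (s1 + β) ^ 2) /
        (((l1 - l0) ^ 2 + (s1 + s0) ^ 2) * ((l1 - l1) ^ 2 + (s1 + s1) ^ 2))) := by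
  have hsplit : ∀ x, ((1 - θ) * cauchyPdf l0 s0 x + θ * cauchyPdf l1 s1 x) *
      log ((1 - θ) * cauchyPdf l0 s0 x + θ * cauchyPdf l1 s1 x) =
      (1 - θ) * (cauchyPdf l0 s0 x * log (C * ((x - α) ^ 2 + β ^ 2) /
        (((x - l0) ^ 2 + s0 ^ 2) * ((x - l1) ^ 2 + s1 ^ 2)))) +
      θ * (cauchyPdf l1 s1 x * log (C * ((x - α) ^ 2 + β ^ 2) /
        (((x - l0) ^ 2 + s0 ^ 2) * ((x - l1) ^ 2 + s1 ^ 2)))) := fun x => by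
    rw [← hmix x]; ring
  simp_rw [hsplit]
  rw [integral_add
      ((integrable_cauchyPdf_mul_log_rational hC hβ hs0 hs1 hs0 α l0 l1 l0).const_mul _)
      ((integrable_cauchyPdf_mul_log_rational hC hβ hs0 hs1 hs1 α l0 l1 l1).const_mul _),
    integral_const_mul, integral_const_mul,
    integral_cauchyPdf_mul_log_rational hC hβ hs0 hs1 hs0 α l0 l1 l0,
    integral_cauchyPdf_mul_log_rational hC hβ hs0 hs1 hs1 α l0 l1 l1]

lemma cauchyPdf_mixture_eq {θ s0 s1 w α β : ℝ} (hs0 : 0 < s0) (hs1 : 0 < s1) (l0 l1 : ℝ)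
    (hw : w = (1 - θ) * s0 + θ * s1) (hw0 : w ≠ 0)
    (hα : α * w = (1 - θ) * s0 * l1 + θ * s1 * l0)
    (hβ : (β * w) ^ 2 =
      s0 * s1 * ((s1 - s0) ^ 2 + (l1 - l0) ^ 2) * θ * (1 - θ) + s0 ^ 2 * s1 ^ 2) (x : ℝ) :
    (1 - θ) * cauchyPdf l0 s0 x + θ * cauchyPdf l1 s1 x =
      w / π * ((x - α) ^ 2 + β ^ 2) / (((x - l0) ^ 2 + s0 ^ 2) * ((x - l1) ^ 2 + s1 ^ 2)) := by
  have key : w * ((x - α) ^ 2 + β ^ 2) =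
      (1 - θ) * s0 * ((x - l1) ^ 2 + s1 ^ 2) + θ * s1 * ((x - l0) ^ 2 + s0 ^ 2) := by
    refine mul_left_cancel₀ hw0 ?_
    calc w * (w * ((x - α) ^ 2 + β ^ 2)) = (w * x - α * w) ^ 2 + (β * w) ^ 2 := by ring
      _ = _ := by rw [hα, hβ, hw]; ring
  unfold cauchyPdf
  field_simp
  linear_combination -(((x - l0) ^ 2 + s0 ^ 2) * ((x - l1) ^ 2 + s1 ^ 2)) * key

lemma sq_add_sq_eq_of_mixture {θ s0 s1 l0 l1 w α β t : ℝ} (hw : w = (1 - θ) * s0 + θ * s1)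
    (hw0 : w ≠ 0) (hα : α * w = (1 - θ) * s0 * l1 + θ * s1 * l0) (hβ : β * w = t)
    (ht : t ^ 2 = s0 * s1 * ((s1 - s0) ^ 2 + (l1 - l0) ^ 2) * θ * (1 - θ) + s0 ^ 2 * s1 ^ 2) :
    (l0 - α) ^ 2 + (s0 + β) ^ 2 =
        s0 * (2 * t + 2 * s0 * s1 * θ + (s1 ^ 2 + s0 ^ 2 + (l1 - l0) ^ 2) * (1 - θ)) / w ∧
      (l1 - α) ^ 2 + (s1 + β) ^ 2 =
        s1 * (2 * t + (s1 ^ 2 + s0 ^ 2 + (l1 - l0) ^ 2) * θ + 2 * s0 * s1 * (1 - θ)) / w := by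
  constructor <;> rw [eq_div_iff hw0] <;> refine mul_left_cancel₀ hw0 ?_
  · calc w * (((l0 - α) ^ 2 + (s0 + β) ^ 2) * w) =
          (l0 * w - α * w) ^ 2 + (s0 * w + β * w) ^ 2 := by ring
      _ = _ := by rw [hα, hβ, hw]; linear_combination ht
  · calc w * (((l1 - α) ^ 2 + (s1 + β) ^ 2) * w) =
          (l1 * w - α * w) ^ 2 + (s1 * w + β * w) ^ 2 := by ring
      _ = _ := by rw [hα, hβ, hw]; linear_combination ht

lemma neg_integral_cauchyPdf_mixture_mul_log {θ s0 s1 w α β t : ℝ} (hs0 : 0 < s0)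
    (hs1 : 0 < s1) (hθ : θ ∈ Set.Ioo (0 : ℝ) 1) (l0 l1 : ℝ)
    (hw : w = (1 - θ) * s0 + θ * s1)
    (hα : α * w = (1 - θ) * s0 * l1 + θ * s1 * l0) (hβ : β * w = t) (ht0 : 0 < t)
    (ht : t ^ 2 = s0 * s1 * ((s1 - s0) ^ 2 + (l1 - l0) ^ 2) * θ * (1 - θ) + s0 ^ 2 * s1 ^ 2) :
    -∫ x, ((1 - θ) * cauchyPdf l0 s0 x + θ * cauchyPdf l1 s1 x) *
        log ((1 - θ) * cauchyPdf l0 s0 x + θ * cauchyPdf l1 s1 x) =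
      (1 - θ) * log (4 * π * s0 * ((s1 + s0) ^ 2 + (l1 - l0) ^ 2) /
        (2 * t + 2 * s0 * s1 * θ + (s1 ^ 2 + s0 ^ 2 + (l1 - l0) ^ 2) * (1 - θ))) +
      θ * log (4 * π * s1 * ((s1 + s0) ^ 2 + (l1 - l0) ^ 2) /
        (2 * t + (s1 ^ 2 + s0 ^ 2 + (l1 - l0) ^ 2) * θ + 2 * s0 * s1 * (1 - θ))) := by
  obtain ⟨hθ0, hθ1⟩ := hθ
  have hθ1' : 0 < 1 - θ := sub_pos.2 hθ1
  have hw0 : 0 < w := by rw [hw]; positivity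
  have hβ0 : 0 < β := by rw [← div_eq_of_eq_mul hw0.ne' hβ.symm]; positivity
  rw [integral_cauchyPdf_mixture_mul_log (div_pos hw0 pi_pos) hβ0 hs0 hs1 α l0 l1
    (cauchyPdf_mixture_eq hs0 hs1 l0 l1 hw hw0.ne' hα (hβ ▸ ht))]
  obtain ⟨h0, h1⟩ := sq_add_sq_eq_of_mixture hw hw0.ne' hα hβ ht
  rw [h0, h1, neg_add, ← mul_neg, ← mul_neg, ← log_inv, ← log_inv]
  congr 3 <;> field_simp <;> ring

/-- Closed form of the differential entropy of a mixture of two Cauchy densities. -/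
theorem entropy_cauchy_mixture (l0 l1 s0 s1 θ Δ S : ℝ) (hs0 : 0 < s0) (hs1 : 0 < s1)
    (hθ : θ ∈ Set.Ioo (0 : ℝ) 1)
    (hΔ : Δ = (l1 - l0) ^ 2)
    (hS : S = s0 * s1 * ((s1 - s0) ^ 2 + Δ) * θ * (1 - θ) + s0 ^ 2 * s1 ^ 2) :
    -∫ x : ℝ, ((1 - θ) * cauchyPdf l0 s0 x + θ * cauchyPdf l1 s1 x) *
        Real.log ((1 - θ) * cauchyPdf l0 s0 x + θ * cauchyPdf l1 s1 x) =
      θ * Real.log (((s1 + s0) ^ 2 + Δ) /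
          (2 * Real.sqrt S + (s1 ^ 2 + s0 ^ 2 + Δ) * θ + 2 * s0 * s1 * (1 - θ))) +
        (1 - θ) * Real.log (((s1 + s0) ^ 2 + Δ) /
          (2 * Real.sqrt S + 2 * s0 * s1 * θ + (s1 ^ 2 + s0 ^ 2 + Δ) * (1 - θ))) +
        θ * Real.log (s1 / s0) + Real.log (4 * π * s0) := by
  have hθ0 := hθ.1
  have hθ1 : 0 < 1 - θ := sub_pos.2 hθ.2
  have hΔ0 : 0 ≤ Δ := hΔ ▸ sq_nonneg _
  have hS0 : 0 < S := by rw [hS]; positivity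
  have hw0 : 0 < (1 - θ) * s0 + θ * s1 := by positivity
  rw [neg_integral_cauchyPdf_mixture_mul_log hs0 hs1 hθ l0 l1 rfl
    (div_mul_cancel₀ _ hw0.ne') (div_mul_cancel₀ √S hw0.ne') (sqrt_pos.2 hS0)
    (by rw [sq_sqrt hS0.le, hS, hΔ]), ← hΔ]
  set A := (s1 + s0) ^ 2 + Δ
  set E0 := 2 * √S + 2 * s0 * s1 * θ + (s1 ^ 2 + s0 ^ 2 + Δ) * (1 - θ)
  set E1 := 2 * √S + (s1 ^ 2 + s0 ^ 2 + Δ) * θ + 2 * s0 * s1 * (1 - θ)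
  have hc : 0 < 4 * π * s0 := by positivity
  have hA0 : 0 < A / E0 := by positivity
  have hA1 : 0 < A / E1 := by positivity
  rw [show 4 * π * s0 * A / E0 = 4 * π * s0 * (A / E0) by ring,
    show 4 * π * s1 * A / E1 = 4 * π * s0 * (s1 / s0 * (A / E1)) by field_simp,
    log_mul hc.ne' hA0.ne', log_mul hc.ne' (by positivity), log_mul (by positivity) hA1.ne']
  ring
end

section
/- Let p_{0,1}(x) = 1/(π(1+x²)) and p_{1,1}(x) = 1/(π(1+(x−1)²)) be the Cauchy densities with parameters (l,s) = (0,1) and (1,1), and for θ ∈ (0,1) let m_θ = (1−θ)·p_{0,1} + θ·p_{1,1}. Then the negentropy admits the closed form: ∫_ℝ m_θ(x)·log m_θ(x) dx = θ·log( (2·√(1+θ−θ²)+θ+2) / (2·√(1+θ−θ²)−θ+3) ) + log( (2·√(1+θ−θ²)−θ+3) / (20·π) ). -/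
open MeasureTheory Real

/-!
Clearing denominators, `m_θ x = ((x - (1 - θ))² + β²) / (π (x² + 1) ((x - 1)² + 1))` with
`β = √(1 + θ - θ²)`, so `log m_θ` is `-log π` plus a signed sum of terms
`log ((x - a)² + b²)`.
Everything then reduces to the Poisson formula for the harmonic function `log |z - (a - i b)|²`
of the upper half-plane, evaluated at `l + i`:
`∫ log ((x - a)² + b²) / (1 + (x - l)²) dx = π log ((a - l)² + (1 + b)²)`.
We prove it by differentiating in `b`: the derivative of the left side is an integral of a rational
function, computed by partial fractions, which matches the derivative of the right side; and the
difference of the two sides tends to `0` as `b → ∞` by dominated convergence.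
-/

open Filter Set Topology

lemma integrable_inv_one_add_sq_mul_log_one_add_sq :
    Integrable fun x : ℝ => (1 + x ^ 2)⁻¹ * log (1 + x ^ 2) := by
  refine ((integrable_rpow_neg_one_add_norm_sq (E := ℝ) (r := 3 / 2) (by norm_num)).const_mul
    4).mono' (by fun_prop) (Eventually.of_forall fun x => ?_)
  have hx : 0 < 1 + x ^ 2 := by positivity
  rw [norm_mul, norm_inv, norm_of_nonneg hx.le, norm_of_nonneg (log_nonneg (by nlinarith)),
    norm_eq_abs, sq_abs]
  -- `log y ≤ 4 y^(1/4)` leaves the integrable decay `(1 + x²)^(-3/4)`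
  calc (1 + x ^ 2)⁻¹ * log (1 + x ^ 2)
      ≤ (1 + x ^ 2)⁻¹ * ((1 + x ^ 2) ^ (1 / 4 : ℝ) / (1 / 4)) := by
        gcongr; exact log_le_rpow_div hx.le (by norm_num)
    _ = 4 * (1 + x ^ 2) ^ (-(3 / 2 : ℝ) / 2) := by
        rw [show -(3 / 2 : ℝ) / 2 = 1 / 4 + (-1) by norm_num, rpow_add hx, rpow_neg_one]
        ring

lemma integrable_inv_one_add_sq_mul_log_sub_sq_add_sq (c : ℝ) {b : ℝ} (hb : b ≠ 0) :
    Integrable fun x : ℝ => (1 + x ^ 2)⁻¹ * log ((x - c) ^ 2 + b ^ 2) := by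
  set C : ℝ := 2 + 2 * c ^ 2 + b ^ 2
  refine (integrable_inv_one_add_sq_mul_log_one_add_sq.add
    (integrable_inv_one_add_sq.const_mul (|log (b ^ 2)| + log C))).mono'
    (by fun_prop) (Eventually.of_forall fun x => ?_)
  have hx : 0 < 1 + x ^ 2 := by positivity
  have hb2 : 0 < b ^ 2 := by positivity
  have hlower : log (b ^ 2) ≤ log ((x - c) ^ 2 + b ^ 2) :=
    log_le_log hb2 (by nlinarith [sq_nonneg (x - c)])
  have hupper : log ((x - c) ^ 2 + b ^ 2) ≤ log C + log (1 + x ^ 2) := by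
    rw [← log_mul (by positivity) hx.ne']
    refine log_le_log (by positivity) ?_
    nlinarith [sq_nonneg (x + c), mul_nonneg (sq_nonneg x) (add_nonneg (sq_nonneg c) hb2.le)]
  have hC : 0 ≤ log C := log_nonneg (by nlinarith [sq_nonneg c, sq_nonneg b])
  have hx' : 0 ≤ log (1 + x ^ 2) := log_nonneg (by nlinarith)
  have habs : |log ((x - c) ^ 2 + b ^ 2)| ≤ log (1 + x ^ 2) + (|log (b ^ 2)| + log C) := by
    rw [abs_le]
    constructor <;> linarith [neg_abs_le (log (b ^ 2)), le_abs_self (log (b ^ 2))]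
  rw [norm_mul, norm_inv, norm_of_nonneg hx.le, norm_eq_abs, Pi.add_apply]
  calc (1 + x ^ 2)⁻¹ * |log ((x - c) ^ 2 + b ^ 2)|
      ≤ (1 + x ^ 2)⁻¹ * (log (1 + x ^ 2) + (|log (b ^ 2)| + log C)) := by gcongr
    _ = _ := by ring

lemma integrable_inv_one_add_sub_sq_mul_log_sub_sq_add_sq (l a : ℝ) {b : ℝ} (hb : b ≠ 0) :
    Integrable fun x : ℝ => (1 + (x - l) ^ 2)⁻¹ * log ((x - a) ^ 2 + b ^ 2) := by
  simpa only [sub_sub_sub_cancel_right] using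
    (integrable_inv_one_add_sq_mul_log_sub_sq_add_sq (a - l) hb).comp_sub_right l

lemma tendsto_atBot_and_atTop_of_eq_comp_inv {f φ : ℝ → ℝ} (hφ : ContinuousAt φ 0)
    (hf : ∀ x ≠ 0, f x = φ x⁻¹) :
    Tendsto f atBot (𝓝 (φ 0)) ∧ Tendsto f atTop (𝓝 (φ 0)) := by
  refine ⟨(hφ.tendsto.comp tendsto_inv_atBot_zero).congr' ?_,
    (hφ.tendsto.comp tendsto_inv_atTop_zero).congr' ?_⟩
  · filter_upwards [eventually_ne_atBot 0] with x hx using (hf x hx).symm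
  · filter_upwards [eventually_ne_atTop 0] with x hx using (hf x hx).symm

lemma tendsto_log_one_add_sq_sub_log_sub_sq_add_sq (c : ℝ) {b : ℝ} (hb : b ≠ 0) :
    Tendsto (fun x => log (1 + x ^ 2) - log ((x - c) ^ 2 + b ^ 2)) atBot (𝓝 0) ∧
      Tendsto (fun x => log (1 + x ^ 2) - log ((x - c) ^ 2 + b ^ 2)) atTop (𝓝 0) := by
  have hW : ∀ x : ℝ, 0 < (x - c) ^ 2 + b ^ 2 := fun x => by positivity
  obtain ⟨hbot, htop⟩ := tendsto_atBot_and_atTop_of_eq_comp_inv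
    (f := fun x => (1 + x ^ 2) / ((x - c) ^ 2 + b ^ 2))
    (φ := fun t => (t ^ 2 + 1) / ((1 - c * t) ^ 2 + (b * t) ^ 2))
    (by fun_prop (disch := norm_num)) fun x hx => by
      rw [div_eq_div_iff (hW x).ne' (by positivity)]; field_simp
  have hlog : ∀ {l : Filter ℝ},
      Tendsto (fun x => (1 + x ^ 2) / ((x - c) ^ 2 + b ^ 2)) l (𝓝 1) →
      Tendsto (fun x => log (1 + x ^ 2) - log ((x - c) ^ 2 + b ^ 2)) l (𝓝 0) := fun h => by
    have := (continuousAt_log one_ne_zero).tendsto.comp h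
    rw [log_one] at this
    exact this.congr fun x => log_div (by positivity) (hW x).ne'
  exact ⟨hlog (by simpa using hbot), hlog (by simpa using htop)⟩

lemma tendsto_sub_div_sub_sq_add_sq (c : ℝ) {b : ℝ} (hb : b ≠ 0) :
    Tendsto (fun x => (x - c) / ((x - c) ^ 2 + b ^ 2)) atBot (𝓝 0) ∧
      Tendsto (fun x => (x - c) / ((x - c) ^ 2 + b ^ 2)) atTop (𝓝 0) := by
  have hW : ∀ x : ℝ, 0 < (x - c) ^ 2 + b ^ 2 := fun x => by positivity
  convert tendsto_atBot_and_atTop_of_eq_comp_inv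
    (f := fun x => (x - c) / ((x - c) ^ 2 + b ^ 2))
    (φ := fun t => t * (1 - c * t) / ((1 - c * t) ^ 2 + (b * t) ^ 2))
    (by fun_prop (disch := norm_num)) (fun x hx => by
      rw [div_eq_div_iff (hW x).ne' (by positivity)]; field_simp) using 3 <;> simp

lemma integral_inv_one_add_sq_mul_inv_sub_sq_add_sq_of_eq {b c A B E G : ℝ} (hb : 0 < b)
    (hdecomp : ∀ x : ℝ, (1 + x ^ 2)⁻¹ * ((x - c) ^ 2 + b ^ 2)⁻¹ =
      A * (x / (1 + x ^ 2) - (x - c) / ((x - c) ^ 2 + b ^ 2)) + B * (1 + x ^ 2)⁻¹ +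
        E * (b / ((x - c) ^ 2 + b ^ 2)) +
        G * ((b ^ 2 - (x - c) ^ 2) / ((x - c) ^ 2 + b ^ 2) ^ 2)) :
    ∫ x : ℝ, (1 + x ^ 2)⁻¹ * ((x - c) ^ 2 + b ^ 2)⁻¹ = π * (B + E) := by
  have hW : ∀ x : ℝ, 0 < (x - c) ^ 2 + b ^ 2 := fun x => by positivity
  have hderiv : ∀ x, HasDerivAt
      (fun x => A / 2 * (log (1 + x ^ 2) - log ((x - c) ^ 2 + b ^ 2)) + B * arctan x +
        E * arctan ((x - c) / b) + G * ((x - c) / ((x - c) ^ 2 + b ^ 2)))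
      ((1 + x ^ 2)⁻¹ * ((x - c) ^ 2 + b ^ 2)⁻¹) x := by
    intro x
    have hP : HasDerivAt (fun x : ℝ => 1 + x ^ 2) (2 * x) x := by
      simpa using (hasDerivAt_pow 2 x).const_add 1
    have hQ : HasDerivAt (fun x : ℝ => (x - c) ^ 2 + b ^ 2) (2 * (x - c)) x := by
      simpa using (((hasDerivAt_id x).sub_const c).pow 2).add_const (b ^ 2)
    have hL : HasDerivAt (fun x : ℝ => (x - c) / b) (1 / b) x := by
      simpa using ((hasDerivAt_id x).sub_const c).div_const b
    have := ((((hP.log (by positivity)).sub (hQ.log (hW x).ne')).const_mul (A / 2)).add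
      ((hasDerivAt_arctan x).const_mul B)).add
      (((hasDerivAt_arctan _).comp x hL).const_mul E) |>.add
      ((((hasDerivAt_id' x).sub_const c).div hQ (hW x).ne').const_mul G)
    refine this.congr_deriv ?_
    rw [hdecomp x]
    field_simp
    ring
  have hint : Integrable fun x : ℝ => (1 + x ^ 2)⁻¹ * ((x - c) ^ 2 + b ^ 2)⁻¹ := by
    refine (integrable_inv_one_add_sq.mul_const (b ^ 2)⁻¹).mono' (by fun_prop)
      (Eventually.of_forall fun x => ?_)
    rw [norm_of_nonneg (by positivity)]
    gcongr
    nlinarith [sq_nonneg (x - c)]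
  obtain ⟨hlog_bot, hlog_top⟩ := tendsto_log_one_add_sq_sub_log_sub_sq_add_sq c hb.ne'
  obtain ⟨hfrac_bot, hfrac_top⟩ := tendsto_sub_div_sub_sq_add_sq c hb.ne'
  have harctan_bot : Tendsto arctan atBot (𝓝 (-(π / 2))) :=
    tendsto_arctan_atBot.mono_right nhdsWithin_le_nhds
  have harctan_top : Tendsto arctan atTop (𝓝 (π / 2)) :=
    tendsto_arctan_atTop.mono_right nhdsWithin_le_nhds
  have hshift_bot : Tendsto (fun x : ℝ => (x - c) / b) atBot atBot :=
    (tendsto_atBot_add_const_right _ (-c) tendsto_id).atBot_div_const hb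
  have hshift_top : Tendsto (fun x : ℝ => (x - c) / b) atTop atTop :=
    (tendsto_atTop_add_const_right _ (-c) tendsto_id).atTop_div_const hb
  rw [integral_of_hasDerivAt_of_tendsto hderiv hint
    (((hlog_bot.const_mul (A / 2)).add (harctan_bot.const_mul B)).add
      ((harctan_bot.comp hshift_bot).const_mul E) |>.add (hfrac_bot.const_mul G))
    (((hlog_top.const_mul (A / 2)).add (harctan_top.const_mul B)).add
      ((harctan_top.comp hshift_top).const_mul E) |>.add (hfrac_top.const_mul G))]
  simp only [mul_zero, zero_add, mul_neg]
  ring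

theorem integral_inv_one_add_sq_mul_inv_sub_sq_add_sq (c : ℝ) {b : ℝ} (hb : 0 < b) :
    ∫ x : ℝ, (1 + x ^ 2)⁻¹ * ((x - c) ^ 2 + b ^ 2)⁻¹ =
      π * (1 + b) / (b * (c ^ 2 + (1 + b) ^ 2)) := by
  -- the resultant of the two quadratic factors; it vanishes iff they coincide, and then the
  -- partial fraction decomposition needs the term `G`
  by_cases hK0 : (c ^ 2 + b ^ 2 - 1) ^ 2 + 4 * c ^ 2 = 0
  · have hc : c = 0 := pow_eq_zero_iff two_ne_zero |>.1 <| by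
      nlinarith [sq_nonneg (c ^ 2 + b ^ 2 - 1), sq_nonneg c]
    have hb1 : b = 1 := by
      subst hc
      have : b ^ 2 - 1 = 0 := by simpa using hK0
      nlinarith
    subst hc hb1
    rw [integral_inv_one_add_sq_mul_inv_sub_sq_add_sq_of_eq (A := 0) (B := 1 / 2) (E := 0)
      (G := 1 / 2) one_pos fun x => by field_simp; ring]
    ring
  · set K := (c ^ 2 + b ^ 2 - 1) ^ 2 + 4 * c ^ 2
    rw [integral_inv_one_add_sq_mul_inv_sub_sq_add_sq_of_eq (A := 2 * c / K)
      (B := (c ^ 2 + b ^ 2 - 1) / K) (E := (c * (2 * c / K) - (c ^ 2 + b ^ 2 - 1) / K) / b)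
      (G := 0) hb fun x => ?_]
    · field_simp
      ring
    · have : 0 < (x - c) ^ 2 + b ^ 2 := by positivity
      field_simp
      ring

lemma hasDerivAt_integral_inv_one_add_sq_mul_log_sub_sq_add_sq (c : ℝ) {b : ℝ} (hb : 0 < b) :
    HasDerivAt (fun t => ∫ x : ℝ, (1 + x ^ 2)⁻¹ * log ((x - c) ^ 2 + t ^ 2))
      (2 * π * (1 + b) / (c ^ 2 + (1 + b) ^ 2)) b := by
  have key := hasDerivAt_integral_of_dominated_loc_of_deriv_le (μ := volume)
    (F := fun t x => (1 + x ^ 2)⁻¹ * log ((x - c) ^ 2 + t ^ 2))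
    (F' := fun t x => (1 + x ^ 2)⁻¹ * (2 * t / ((x - c) ^ 2 + t ^ 2)))
    (bound := fun x => (1 + x ^ 2)⁻¹ * (4 / b)) (Ioi_mem_nhds (half_lt_self hb))
    (Eventually.of_forall fun t => by fun_prop)
    (integrable_inv_one_add_sq_mul_log_sub_sq_add_sq c hb.ne') (by fun_prop)
    (Eventually.of_forall fun x t (ht : b / 2 < t) => ?_)
    (integrable_inv_one_add_sq.mul_const _)
    (Eventually.of_forall fun x t (ht : b / 2 < t) => ?_)
  · have hval : ∫ x : ℝ, (1 + x ^ 2)⁻¹ * (2 * b / ((x - c) ^ 2 + b ^ 2)) =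
        2 * π * (1 + b) / (c ^ 2 + (1 + b) ^ 2) := by
      simp_rw [div_eq_mul_inv (2 * b), mul_left_comm _ (2 * b)]
      rw [integral_const_mul, integral_inv_one_add_sq_mul_inv_sub_sq_add_sq c hb]
      field_simp
    exact hval ▸ key.2
  · have ht0 : 0 < t := by linarith
    rw [norm_mul, norm_inv, norm_of_nonneg (by positivity : (0 : ℝ) ≤ 1 + x ^ 2),
      norm_of_nonneg (by positivity)]
    refine mul_le_mul_of_nonneg_left ?_ (by positivity)
    calc 2 * t / ((x - c) ^ 2 + t ^ 2) ≤ 2 * t / t ^ 2 := by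
          gcongr; nlinarith [sq_nonneg (x - c)]
      _ = 2 / t := by field_simp
      _ ≤ 4 / b := by rw [div_le_div_iff₀ ht0 hb]; linarith
  · have ht0 : 0 < t := by linarith
    have hW : 0 < (x - c) ^ 2 + t ^ 2 := by positivity
    simpa using ((((hasDerivAt_pow 2 t).const_add ((x - c) ^ 2)).log hW.ne').const_mul
      (1 + x ^ 2)⁻¹)

lemma abs_log_sq_add_sq_sub_log_sq_add_one_add_sq_le (d c : ℝ) {t : ℝ} (ht : 1 ≤ t) :
    |log (d ^ 2 + t ^ 2) - log (c ^ 2 + (1 + t) ^ 2)| ≤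
      log (d ^ 2 + 1) + log (4 * (c ^ 2 + 1)) := by
  have hW : 0 < d ^ 2 + t ^ 2 := by positivity
  have hK : 0 < c ^ 2 + (1 + t) ^ 2 := by positivity
  have hupper : log (d ^ 2 + t ^ 2) ≤ log (c ^ 2 + (1 + t) ^ 2) + log (d ^ 2 + 1) := by
    rw [← log_mul hK.ne' (by positivity)]
    refine log_le_log hW ?_
    nlinarith [sq_nonneg d, sq_nonneg c, sq_nonneg (d * c), sq_nonneg (d * (1 + t))]
  have hlower : log (c ^ 2 + (1 + t) ^ 2) ≤ log (d ^ 2 + t ^ 2) + log (4 * (c ^ 2 + 1)) := by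
    rw [← log_mul hW.ne' (by positivity)]
    refine log_le_log hK ?_
    nlinarith [sq_nonneg d, sq_nonneg (c * t), sq_nonneg (t - 1),
      mul_nonneg (sq_nonneg d) (sq_nonneg c)]
  have h1 : 0 ≤ log (d ^ 2 + 1) := log_nonneg (by nlinarith [sq_nonneg d])
  have h2 : 0 ≤ log (4 * (c ^ 2 + 1)) := log_nonneg (by nlinarith [sq_nonneg c])
  rw [abs_le]
  constructor <;> linarith

lemma tendsto_log_sq_add_sq_sub_log_sq_add_one_add_sq (d c : ℝ) :
    Tendsto (fun t => log (d ^ 2 + t ^ 2) - log (c ^ 2 + (1 + t) ^ 2)) atTop (𝓝 0) := by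
  -- the ratio of the two arguments of `log` is a function of `t⁻¹`, continuous at `0`
  have hφ : ContinuousAt
      (fun s : ℝ => (d ^ 2 * s ^ 2 + 1) / (c ^ 2 * s ^ 2 + (s + 1) ^ 2)) 0 := by
    fun_prop (disch := norm_num)
  have hratio := (continuousAt_log (by norm_num)).tendsto.comp
    (hφ.tendsto.comp tendsto_inv_atTop_zero)
  norm_num at hratio
  refine hratio.congr' ?_
  filter_upwards [eventually_gt_atTop 0] with t ht
  simp only [Function.comp_apply]
  rw [← log_div (by positivity) (by positivity)]
  congr 1
  field_simp

lemma tendsto_integral_inv_one_add_sq_mul_log_sub_sq_add_sq_sub_log (c : ℝ) :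
    Tendsto (fun t => (∫ x : ℝ, (1 + x ^ 2)⁻¹ * log ((x - c) ^ 2 + t ^ 2)) -
      π * log (c ^ 2 + (1 + t) ^ 2)) atTop (𝓝 0) := by
  have hdct : Tendsto (fun t => ∫ x : ℝ,
      (1 + x ^ 2)⁻¹ * (log ((x - c) ^ 2 + t ^ 2) - log (c ^ 2 + (1 + t) ^ 2))) atTop
      (𝓝 (∫ _ : ℝ, (0 : ℝ))) := by
    refine tendsto_integral_filter_of_dominated_convergence
      (fun x => (1 + x ^ 2)⁻¹ * log ((x - c) ^ 2 + 1 ^ 2) +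
        (1 + x ^ 2)⁻¹ * log (4 * (c ^ 2 + 1)))
      (Eventually.of_forall fun t => by fun_prop) ?_
      ((integrable_inv_one_add_sq_mul_log_sub_sq_add_sq c one_ne_zero).add
        (integrable_inv_one_add_sq.mul_const _)) (Eventually.of_forall fun x => ?_)
    · filter_upwards [eventually_ge_atTop 1] with t ht
      refine Eventually.of_forall fun x => ?_
      rw [norm_mul, norm_inv, norm_of_nonneg (by positivity : (0 : ℝ) ≤ 1 + x ^ 2), norm_eq_abs,
        one_pow, ← mul_add]
      gcongr
      exact abs_log_sq_add_sq_sub_log_sq_add_one_add_sq_le (x - c) c ht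
    · simpa using (tendsto_log_sq_add_sq_sub_log_sq_add_one_add_sq (x - c) c).const_mul
        (1 + x ^ 2)⁻¹
  rw [integral_zero] at hdct
  refine hdct.congr' ?_
  filter_upwards [eventually_gt_atTop 0] with t ht
  simp_rw [mul_sub]
  rw [integral_sub (integrable_inv_one_add_sq_mul_log_sub_sq_add_sq c ht.ne')
    (integrable_inv_one_add_sq.mul_const _), integral_mul_const, integral_univ_inv_one_add_sq]

theorem integral_inv_one_add_sq_mul_log_sub_sq_add_sq (c : ℝ) {b : ℝ} (hb : 0 < b) :
    ∫ x : ℝ, (1 + x ^ 2)⁻¹ * log ((x - c) ^ 2 + b ^ 2) = π * log (c ^ 2 + (1 + b) ^ 2) := by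
  set G := fun t => (∫ x : ℝ, (1 + x ^ 2)⁻¹ * log ((x - c) ^ 2 + t ^ 2)) -
    π * log (c ^ 2 + (1 + t) ^ 2)
  have hG : ∀ t ∈ Ioi (0 : ℝ), HasDerivAt G 0 t := fun t (ht : 0 < t) => by
    have hK : 0 < c ^ 2 + (1 + t) ^ 2 := by positivity
    have hK' : HasDerivAt (fun t : ℝ => c ^ 2 + (1 + t) ^ 2) (2 * (1 + t)) t := by
      simpa using (((hasDerivAt_id' t).const_add 1).pow 2).const_add (c ^ 2)
    have := (hasDerivAt_integral_inv_one_add_sq_mul_log_sub_sq_add_sq c ht).sub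
      ((hK'.log hK.ne').const_mul π)
    refine this.congr_deriv ?_
    field_simp
    ring
  have hconst : ∀ t ∈ Ioi (0 : ℝ), G t = G b := fun t ht =>
    isOpen_Ioi.is_const_of_deriv_eq_zero isPreconnected_Ioi
      (fun t ht => (hG t ht).differentiableAt.differentiableWithinAt) (fun t ht => (hG t ht).deriv)
      ht hb
  have hGb : G b = 0 := tendsto_nhds_unique
    (tendsto_const_nhds.congr' (eventually_gt_atTop 0 |>.mono fun t ht => (hconst t ht).symm))
    (tendsto_integral_inv_one_add_sq_mul_log_sub_sq_add_sq_sub_log c)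
  exact sub_eq_zero.1 hGb

theorem integral_inv_one_add_sub_sq_mul_log_sub_sq_add_sq (l a : ℝ) {b : ℝ} (hb : 0 < b) :
    ∫ x : ℝ, (1 + (x - l) ^ 2)⁻¹ * log ((x - a) ^ 2 + b ^ 2) =
      π * log ((a - l) ^ 2 + (1 + b) ^ 2) := by
  rw [← integral_inv_one_add_sq_mul_log_sub_sq_add_sq (a - l) hb,
    ← integral_sub_right_eq_self (fun x => (1 + x ^ 2)⁻¹ * log ((x - (a - l)) ^ 2 + b ^ 2)) l]
  simp only [sub_sub_sub_cancel_right]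

noncomputable def cauchyMixture (θ x : ℝ) : ℝ :=
  (1 - θ) * (1 / (π * (1 + x ^ 2))) + θ * (1 / (π * (1 + (x - 1) ^ 2)))

-- stated with every factor in the shape `(x - a) ^ 2 + b ^ 2` of the Poisson formula above
lemma log_cauchyMixture {θ β : ℝ} (hβ : 0 < β) (hβsq : β ^ 2 = 1 + θ - θ ^ 2) (x : ℝ) :
    log (cauchyMixture θ x) = log ((x - (1 - θ)) ^ 2 + β ^ 2) - log π -
      log ((x - 0) ^ 2 + 1 ^ 2) - log ((x - 1) ^ 2 + 1 ^ 2) := by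
  have hmix : cauchyMixture θ x =
      ((x - (1 - θ)) ^ 2 + β ^ 2) / (π * (((x - 0) ^ 2 + 1 ^ 2) * ((x - 1) ^ 2 + 1 ^ 2))) := by
    rw [cauchyMixture, hβsq]
    field_simp
    ring
  rw [hmix, log_div (by positivity) (by positivity), log_mul pi_ne_zero (by positivity),
    log_mul (by positivity) (by positivity)]
  ring

lemma integral_inv_one_add_sub_sq_mul_log_cauchyMixture {θ β : ℝ} (hβ : 0 < β)
    (hβsq : β ^ 2 = 1 + θ - θ ^ 2) (l : ℝ) :
    Integrable (fun x => (1 + (x - l) ^ 2)⁻¹ * log (cauchyMixture θ x)) ∧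
    ∫ x, (1 + (x - l) ^ 2)⁻¹ * log (cauchyMixture θ x) =
      π * (log ((1 - θ - l) ^ 2 + (1 + β) ^ 2) - log π - log ((0 - l) ^ 2 + (1 + 1) ^ 2) -
        log ((1 - l) ^ 2 + (1 + 1) ^ 2)) := by
  have hN := integrable_inv_one_add_sub_sq_mul_log_sub_sq_add_sq l (1 - θ) hβ.ne'
  have h0 := integrable_inv_one_add_sub_sq_mul_log_sub_sq_add_sq l 0 one_ne_zero
  have h1 := integrable_inv_one_add_sub_sq_mul_log_sub_sq_add_sq l 1 one_ne_zero
  have hc := (integrable_inv_one_add_sq.comp_sub_right l).mul_const (log π)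
  have hπ : ∫ x : ℝ, (1 + (x - l) ^ 2)⁻¹ = π :=
    (integral_sub_right_eq_self (fun x => (1 + x ^ 2)⁻¹) l).trans integral_univ_inv_one_add_sq
  simp_rw [log_cauchyMixture hβ hβsq, mul_sub]
  refine ⟨((hN.sub hc).sub h0).sub h1, ?_⟩
  rw [integral_sub ?_ h1, integral_sub ?_ h0, integral_sub hN hc, integral_mul_const, hπ,
    integral_inv_one_add_sub_sq_mul_log_sub_sq_add_sq l (1 - θ) hβ,
    integral_inv_one_add_sub_sq_mul_log_sub_sq_add_sq l 0 one_pos,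
    integral_inv_one_add_sub_sq_mul_log_sub_sq_add_sq l 1 one_pos]
  exacts [hN.sub hc, (hN.sub hc).sub h0]

lemma integral_cauchyMixture_mul_log {θ β : ℝ} (hβ : 0 < β)
    (hβsq : β ^ 2 = 1 + θ - θ ^ 2) :
    ∫ x, cauchyMixture θ x * log (cauchyMixture θ x) =
      (1 - θ) * log (2 * β - θ + 3) + θ * log (2 * β + θ + 2) - log (20 * π) := by
  obtain ⟨hi0, he0⟩ := integral_inv_one_add_sub_sq_mul_log_cauchyMixture hβ hβsq 0
  obtain ⟨hi1, he1⟩ := integral_inv_one_add_sub_sq_mul_log_cauchyMixture hβ hβsq 1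
  have hsplit : ∀ x, cauchyMixture θ x * log (cauchyMixture θ x) =
      (1 - θ) / π * ((1 + (x - 0) ^ 2)⁻¹ * log (cauchyMixture θ x)) +
        θ / π * ((1 + (x - 1) ^ 2)⁻¹ * log (cauchyMixture θ x)) := fun x => by
    nth_rw 1 [cauchyMixture]
    rw [sub_zero]
    field_simp
  simp_rw [hsplit]
  rw [integral_add (hi0.const_mul _) (hi1.const_mul _), integral_const_mul, integral_const_mul,
    he0, he1, show (1 - θ - 0) ^ 2 + (1 + β) ^ 2 = 2 * β - θ + 3 by linear_combination hβsq,
    show (1 - θ - 1) ^ 2 + (1 + β) ^ 2 = 2 * β + θ + 2 by linear_combination hβsq,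
    show (20 : ℝ) * π = 4 * 5 * π by norm_num, log_mul (by norm_num) pi_ne_zero,
    log_mul (by norm_num) (by norm_num)]
  field_simp
  norm_num
  ring

/-- Closed form of the negentropy of the mixture of the standard Cauchy density
`p_{0,1}` and the Cauchy density `p_{1,1}`. -/
theorem negentropy_cauchy_0111 (θ : ℝ) (hθ : θ ∈ Set.Ioo (0 : ℝ) 1) :
    ∫ x : ℝ, ((1 - θ) * (1 / (π * (1 + x ^ 2))) + θ * (1 / (π * (1 + (x - 1) ^ 2)))) *
        Real.log ((1 - θ) * (1 / (π * (1 + x ^ 2))) +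
          θ * (1 / (π * (1 + (x - 1) ^ 2)))) =
      θ * Real.log ((2 * Real.sqrt (1 + θ - θ ^ 2) + θ + 2) /
          (2 * Real.sqrt (1 + θ - θ ^ 2) - θ + 3)) +
        Real.log ((2 * Real.sqrt (1 + θ - θ ^ 2) - θ + 3) / (20 * π)) := by
  obtain ⟨hθ0, hθ1⟩ := hθ
  have hdisc : 0 < 1 + θ - θ ^ 2 := by nlinarith
  have hβ : 0 < √(1 + θ - θ ^ 2) := sqrt_pos.2 hdisc
  have hA : 0 < 2 * √(1 + θ - θ ^ 2) + θ + 2 := by positivity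
  have hB : 0 < 2 * √(1 + θ - θ ^ 2) - θ + 3 := by linarith
  change ∫ x, cauchyMixture θ x * log (cauchyMixture θ x) = _
  rw [integral_cauchyMixture_mul_log hβ (sq_sqrt hdisc.le), log_div hA.ne' hB.ne',
    log_div hB.ne' (by positivity)]
  ring
end
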